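/- arXiv:2106.08257 — 2 statements merged into one kernel-verified Lean document; each statement's English description precedes it below -/
import Mathlib

section
/- Touchard's identity: sum over k ≥ 0 of 2^{n-2k} · binom(n, 2k) · C_k equals C_{n+1}, where C_m denotes the m-th Catalan number. -/
open Polynomial Finset

lemma key_expand (n : ℕ) :
    ((X + 1 : Polynomial ℕ)) ^ (2 * n) =
      ∑ m ∈ range (n + 1), ∑ i ∈ range (n + 1),
        (n.choose m * 2 ^ (n - m) * m.choose i) • (X : Polynomial ℕ) ^ (2 * i + (n - m)) := by
  have h1 : ((X + 1 : Polynomial ℕ)) ^ (2 * n) = ((X ^ 2 + 1) + 2 * X) ^ n := by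
    rw [pow_mul]; ring_nf
  rw [h1, add_pow]
  refine sum_congr rfl fun m hm => ?_
  have h2 : ((X ^ 2 + 1 : Polynomial ℕ)) ^ m =
      ∑ i ∈ range (m + 1), (m.choose i) • (X : Polynomial ℕ) ^ (2 * i) := by
    rw [add_pow]
    refine sum_congr rfl fun i hi => ?_
    simp [← pow_mul, nsmul_eq_mul, mul_comm]
  rw [h2, sum_mul, sum_mul]
  rw [← sum_subset (f := fun i => (n.choose m * 2 ^ (n - m) * m.choose i) • (X : Polynomial ℕ) ^ (2 * i + (n - m))) (range_subset_range.2 (by have := mem_range.mp hm; omega : m + 1 ≤ n + 1))]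
  · refine sum_congr rfl fun i hi => ?_
    simp only [nsmul_eq_mul, mul_pow, Nat.cast_mul, Nat.cast_pow, Nat.cast_ofNat, pow_add]
    ring
  · intro i _ hi
    simp at hi
    have : m.choose i = 0 := Nat.choose_eq_zero_of_lt (by omega)
    simp [this]

lemma key_coeff (n N : ℕ) :
    (2 * n).choose N =
      ∑ i ∈ range (n + 1), ∑ m ∈ range (n + 1),
        (if 2 * i + (n - m) = N then n.choose m * 2 ^ (n - m) * m.choose i else 0) := by
  have := Polynomial.coeff_X_add_one_pow ℕ (2 * n) N
  rw [key_expand] at this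
  rw [Nat.cast_id] at this
  simp only [Polynomial.finset_sum_coeff, Polynomial.coeff_smul, Polynomial.coeff_X_pow,
    smul_eq_mul, mul_ite, mul_one, mul_zero] at this
  rw [← this, Finset.sum_comm]
  exact Finset.sum_congr rfl fun i _ => Finset.sum_congr rfl fun m _ => if_congr eq_comm rfl rfl

lemma lemA (n : ℕ) :
    ∑ k ∈ range (n + 1), 2 ^ (n - 2 * k) * n.choose (2 * k) * (2 * k).choose k =
      (2 * n).choose n := by
  rw [key_coeff n n]
  refine Finset.sum_congr rfl fun i hi => ?_
  have h1 : ∀ m ∈ range (n + 1),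
      (if 2 * i + (n - m) = n then n.choose m * 2 ^ (n - m) * m.choose i else 0) =
      (if m = 2 * i then n.choose m * 2 ^ (n - m) * m.choose i else 0) := by
    intro m hm
    have := mem_range.mp hm
    exact if_congr (by omega) rfl rfl
  rw [Finset.sum_congr rfl h1, Finset.sum_ite_eq' (range (n + 1)) (2 * i)]
  by_cases h : 2 * i ≤ n
  · rw [if_pos (mem_range.mpr (by omega))]; ring
  · rw [if_neg (by simp [mem_range]; omega), Nat.choose_eq_zero_of_lt (by omega)]
    ring

lemma lemB (n : ℕ) :
    ∑ k ∈ range (n + 1), 2 ^ (n - 2 * k) * n.choose (2 * k) * (2 * k).choose (k + 1) =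
      (2 * n).choose (n + 2) := by
  rw [key_coeff n (n + 2)]
  have h1 : ∀ i ∈ range (n + 1),
      (∑ m ∈ range (n + 1),
        if 2 * i + (n - m) = n + 2 then n.choose m * 2 ^ (n - m) * m.choose i else 0) =
      (if i = 0 then 0 else
        if 2 * i - 2 ≤ n then n.choose (2 * i - 2) * 2 ^ (n - (2 * i - 2)) * (2 * i - 2).choose i
        else 0) := by
    intro i hi
    rcases Nat.eq_zero_or_pos i with rfl | hpos
    · simp only [if_pos rfl]
      refine Finset.sum_eq_zero fun m hm => ?_
      have := mem_range.mp hm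
      rw [if_neg (by omega)]
    · rw [if_neg (by omega)]
      have h2 : ∀ m ∈ range (n + 1),
          (if 2 * i + (n - m) = n + 2 then n.choose m * 2 ^ (n - m) * m.choose i else 0) =
          (if m = 2 * i - 2 then n.choose m * 2 ^ (n - m) * m.choose i else 0) := by
        intro m hm
        have := mem_range.mp hm
        exact if_congr (by omega) rfl rfl
      rw [Finset.sum_congr rfl h2, Finset.sum_ite_eq' (range (n + 1)) (2 * i - 2)]
      by_cases h : 2 * i - 2 ≤ n
      · rw [if_pos (mem_range.mpr (by omega)), if_pos h]
      · rw [if_neg (by simp [mem_range]; omega), if_neg h]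
  rw [Finset.sum_congr rfl h1]
  conv_rhs => rw [Finset.sum_range_succ']
  rw [if_pos rfl, add_zero]
  conv_lhs => rw [Finset.sum_range_succ]
  have hlast : 2 ^ (n - 2 * n) * n.choose (2 * n) * (2 * n).choose (n + 1) = 0 := by
    rcases Nat.eq_zero_or_pos n with rfl | hpos
    · simp
    · rw [Nat.choose_eq_zero_of_lt (by omega)]; ring
  rw [hlast, add_zero]
  refine Finset.sum_congr rfl fun k hk => ?_
  have hk' := mem_range.mp hk
  rw [if_neg (by omega)]
  have he : 2 * (k + 1) - 2 = 2 * k := by omega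
  rw [he]
  by_cases h : 2 * k ≤ n
  · rw [if_pos h]; ring
  · rw [if_neg h, Nat.choose_eq_zero_of_lt (by omega)]; ring

lemma lemC (k : ℕ) : (2 * k).choose k = (2 * k).choose (k + 1) + catalan k := by
  have f1 := Nat.choose_succ_right_eq (2 * k) k
  have f2 := succ_mul_catalan_eq_centralBinom k
  rw [Nat.centralBinom] at f2
  have hs : 2 * k - k = k := by omega
  rw [hs] at f1
  refine Nat.eq_of_mul_eq_mul_left (show 0 < k + 1 by omega) ?_
  zify at f1 f2 ⊢
  linear_combination -f1 - f2

lemma lemD (n : ℕ) : (2 * n).choose n = (2 * n).choose (n + 2) + catalan (n + 1) := by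
  rcases n with _ | m
  · simp [catalan_one]
  · have f1 := Nat.choose_succ_right_eq (2 * (m + 1)) (m + 1 + 1)
    have f2 := Nat.choose_succ_right_eq (2 * (m + 1)) (m + 1)
    have f3 := Nat.succ_mul_centralBinom_succ (m + 1)
    have f4 := succ_mul_catalan_eq_centralBinom (m + 1 + 1)
    rw [Nat.centralBinom] at f3 f4
    rw [Nat.centralBinom] at f3
    have hs1 : 2 * (m + 1) - (m + 1 + 1) = m := by omega
    have hs2 : 2 * (m + 1) - (m + 1) = m + 1 := by omega
    rw [hs1] at f1
    rw [hs2] at f2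
    refine Nat.eq_of_mul_eq_mul_left (show 0 < (m + 2) * (m + 3) by positivity) ?_
    zify at f1 f2 f3 f4 ⊢
    linear_combination (-(m + 2 : ℤ)) * f1 + (-(m : ℤ)) * f2 - f3 + (-(m + 2 : ℤ)) * f4

/-- Touchard's identity:
`∑_{k ≥ 0} 2^(n-2k) · binom(n, 2k) · C_k = C_{n+1}`. -/
theorem statement14 (n : ℕ) :
    ∑ k ∈ Finset.range (n + 1), 2 ^ (n - 2 * k) * n.choose (2 * k) * catalan k =
      catalan (n + 1) := by
  have hsplit :
      (∑ k ∈ range (n + 1), 2 ^ (n - 2 * k) * n.choose (2 * k) * (2 * k).choose (k + 1)) +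
        (∑ k ∈ range (n + 1), 2 ^ (n - 2 * k) * n.choose (2 * k) * catalan k) =
      ∑ k ∈ range (n + 1), 2 ^ (n - 2 * k) * n.choose (2 * k) * (2 * k).choose k := by
    rw [← Finset.sum_add_distrib]
    refine Finset.sum_congr rfl fun k _ => ?_
    rw [← mul_add, ← lemC k]
  rw [lemA n, lemB n, lemD n] at hsplit
  omega
end

section
/- Let g(t) = sum_{n≥0} g_n t^n be the formal power series over a commutative ring solving g(t) = f(t·g(t)) with f(t) = sum_{n≥0} f_n t^n, f_0 = 1, where the f_n are polynomial indeterminates. Then g_n = sum over Łukasiewicz words (w_1,...,w_{n+1}) of the monomial f_{w_1} f_{w_2} ... f_{w_{n+1}}, where a Łukasiewicz word of length n+1 is a sequence of nonnegative integers with w_1 + ... + w_{n+1} = n and w_1 + ... + w_i ≥ i for all i ≤ n. -/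
open scoped Classical

noncomputable section

/-- The coefficients of the generic series `f(t) = 1 + f₁ t + f₂ t² + ⋯` whose
coefficients `f₁, f₂, …` are polynomial indeterminates (and `f₀ = 1`). -/
def fcoeff (m : ℕ) : MvPolynomial ℕ ℤ :=
  if m = 0 then 1 else MvPolynomial.X m

/-- The Finset of Łukasiewicz words of length `n + 1`: sequences
`(w₁, …, w_{n+1})` of nonnegative integers (here bounded by `n`, which is
automatic from the sum condition) with `w₁ + ⋯ + w_{n+1} = n` and
`w₁ + ⋯ + wᵢ ≥ i` for all `i ≤ n`. -/
def lukWords (n : ℕ) : Finset (Fin (n + 1) → Fin (n + 1)) :=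
  Finset.univ.filter fun w =>
    (∑ j, (w j : ℕ)) = n ∧
    ∀ i : ℕ, i ≤ n →
      i ≤ ∑ j ∈ Finset.univ.filter (fun j : Fin (n + 1) => (j : ℕ) < i), (w j : ℕ)

/-- `t` is a concatenation of `m` Łukasiewicz words. -/
def Pw (m : ℕ) (t : List ℕ) : Prop :=
  t.sum + m = t.length ∧ ∀ i < t.length, i < m + (t.take i).sum

def allLists : ℕ → ℕ → Finset (List ℕ)
  | 0, _ => {[]}
  | n+1, b => ((Finset.range b) ×ˢ allLists n b).image fun p => p.1 :: p.2

lemma mem_allLists {b : ℕ} : ∀ {n : ℕ} {l : List ℕ},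
    l ∈ allLists n b ↔ l.length = n ∧ ∀ x ∈ l, x < b := by
  intro n
  induction n with
  | zero =>
    intro l
    simp only [allLists, Finset.mem_singleton]
    constructor
    · rintro rfl; simp
    · rintro ⟨h1, _⟩; exact List.length_eq_zero_iff.mp h1
  | succ n ih =>
    intro l
    cases l with
    | nil =>
      simp [allLists]
    | cons a t =>
      simp only [allLists, Finset.mem_image, Finset.mem_product, Finset.mem_range,
        Prod.exists, List.length_cons, List.mem_cons]
      constructor
      · rintro ⟨x, y, ⟨hx, hy⟩, h⟩
        obtain ⟨rfl, rfl⟩ : x = a ∧ y = t := by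
          constructor <;> [exact (List.cons.injEq .. ▸ h).1; exact (List.cons.injEq .. ▸ h).2]
        rcases ih.mp hy with ⟨h1, h2⟩
        refine ⟨by omega, ?_⟩
        rintro z (rfl | hz)
        · exact hx
        · exact h2 z hz
      · rintro ⟨h1, h2⟩
        exact ⟨a, t, ⟨h2 a (Or.inl rfl), ih.mpr ⟨by omega, fun x hx => h2 x (Or.inr hx)⟩⟩, rfl⟩

def LukSet (m s : ℕ) : Finset (List ℕ) :=
  (allLists (s + m) (s + 1)).filter fun t => Pw m t

lemma mem_LukSet {m s : ℕ} {t : List ℕ} : t ∈ LukSet m s ↔ Pw m t ∧ t.sum = s := by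
  simp only [LukSet, Finset.mem_filter, mem_allLists]
  constructor
  · rintro ⟨⟨h1, _⟩, h2⟩
    exact ⟨h2, by have := h2.1; omega⟩
  · rintro ⟨h1, h2⟩
    refine ⟨⟨by have := h1.1; omega, fun x hx => ?_⟩, h1⟩
    have := List.le_sum_of_mem hx
    omega

def Ww (t : List ℕ) : MvPolynomial ℕ ℤ := (t.map fcoeff).prod

lemma Ww_append (a b : List ℕ) : Ww (a ++ b) = Ww a * Ww b := by
  simp [Ww]

lemma Ww_cons (a : ℕ) (t : List ℕ) : Ww (a :: t) = fcoeff a * Ww t := by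
  simp [Ww]

def LS (s : ℕ) : MvPolynomial ℕ ℤ := ∑ t ∈ LukSet 1 s, Ww t

lemma sum_take_mono (l : List ℕ) {i j : ℕ} (h : i ≤ j) : (l.take i).sum ≤ (l.take j).sum :=
  List.monotone_sum_take l h

/-- the first-block cut point -/
def cut (t : List ℕ) : ℕ := sInf {k | (t.take k).sum + 1 ≤ k}

lemma cut_basic {m : ℕ} {t : List ℕ} (h : Pw (m+1) t) :
    1 ≤ cut t ∧ cut t ≤ t.length ∧ (t.take (cut t)).sum + 1 = cut t ∧
    ∀ i < cut t, i ≤ (t.take i).sum := by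
  have hlen : t.length ∈ {k | (t.take k).sum + 1 ≤ k} := by
    simp only [Set.mem_setOf_eq, List.take_of_length_le (le_refl t.length)]
    have := h.1; omega
  have hne : {k | (t.take k).sum + 1 ≤ k}.Nonempty := ⟨_, hlen⟩
  have hmem : (t.take (cut t)).sum + 1 ≤ cut t := Nat.sInf_mem hne
  have hle : cut t ≤ t.length := Nat.sInf_le hlen
  have hmin : ∀ i < cut t, i ≤ (t.take i).sum := by
    intro i hi
    by_contra hc
    push_neg at hc
    have : cut t ≤ i :=
      Nat.sInf_le (show i ∈ {k | (t.take k).sum + 1 ≤ k} by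
        simp only [Set.mem_setOf_eq]; omega)
    omega
  have hpos : 1 ≤ cut t := by
    rcases Nat.eq_zero_or_pos (cut t) with h0 | h0
    · rw [h0] at hmem; simp at hmem
    · exact h0
  refine ⟨hpos, hle, ?_, hmin⟩
  have h1 : cut t - 1 ≤ (t.take (cut t - 1)).sum := hmin _ (by omega)
  have h2 : (t.take (cut t - 1)).sum ≤ (t.take (cut t)).sum := sum_take_mono t (by omega)
  omega

lemma Pw_take_drop {m : ℕ} {t : List ℕ} (h : Pw (m+1) t) :
    Pw 1 (t.take (cut t)) ∧ Pw m (t.drop (cut t)) := by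
  obtain ⟨hpos, hle, heq, hmin⟩ := cut_basic h
  set k := cut t with hk
  have hlen_take : (t.take k).length = k := by rw [List.length_take]; omega
  have hsum_split : (t.take k).sum + (t.drop k).sum = t.sum := by
    conv_rhs => rw [← List.take_append_drop k t]
    rw [List.sum_append]
  have hlen_drop : (t.drop k).length = t.length - k := List.length_drop
  constructor
  · refine ⟨by omega, ?_⟩
    intro i hi
    rw [hlen_take] at hi
    rw [List.take_take, min_eq_left hi.le]
    have := hmin i hi
    omega
  · refine ⟨by have := h.1; omega, ?_⟩
    intro j hj
    rw [hlen_drop] at hj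
    have hkj : k + j < t.length := by omega
    have hcond := h.2 (k + j) hkj
    have htka : t.take (k + j) = t.take k ++ (t.drop k).take j := List.take_add
    rw [htka, List.sum_append] at hcond
    omega

lemma Pw_append_one {m : ℕ} {a b : List ℕ} (ha : Pw 1 a) (hb : Pw m b) :
    Pw (m+1) (a ++ b) := by
  have hal : a.sum + 1 = a.length := ha.1
  have hbl : b.sum + m = b.length := hb.1
  refine ⟨by simp only [List.sum_append, List.length_append]; omega, ?_⟩
  intro i hi
  rw [List.length_append] at hi
  by_cases hia : i ≤ a.length
  · rw [List.take_append_of_le_length hia]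
    rcases Nat.lt_or_ge i a.length with hlt | hge
    · have := ha.2 i hlt; omega
    · have : i = a.length := by omega
      subst this
      rw [List.take_of_length_le (le_refl _)]
      have h0 := hb.2 0 (by omega)
      simp only [List.take_zero, List.sum_nil] at h0
      omega
  · push_neg at hia
    have : i = a.length + (i - a.length) := by omega
    rw [this, List.take_add, List.take_append_of_le_length (le_refl a.length),
      List.take_of_length_le (le_refl _), List.drop_left, List.sum_append]
    have hj : i - a.length < b.length := by omega
    have := hb.2 (i - a.length) hj
    omega

lemma cut_append {a : List ℕ} (b : List ℕ) (ha : Pw 1 a) : cut (a ++ b) = a.length := by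
  have h1 : a.sum + 1 = a.length := ha.1
  have hmem : a.length ∈ {k | ((a ++ b).take k).sum + 1 ≤ k} := by
    simp only [Set.mem_setOf_eq, List.take_left]
    omega
  have hle : cut (a ++ b) ≤ a.length := Nat.sInf_le hmem
  have hmem2 : ((a ++ b).take (cut (a ++ b))).sum + 1 ≤ cut (a ++ b) :=
    Nat.sInf_mem ⟨_, hmem⟩
  rcases eq_or_lt_of_le hle with h | hlt
  · exact h
  · exfalso
    rw [List.take_append_of_le_length hlt.le] at hmem2
    have := ha.2 _ hlt
    omega

lemma Pw_one_cons {m : ℕ} {t : List ℕ} : Pw 1 (m :: t) ↔ Pw m t := by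
  constructor
  · rintro ⟨h1, h2⟩
    simp only [List.sum_cons, List.length_cons] at h1
    refine ⟨by omega, ?_⟩
    intro i hi
    have h := h2 (i + 1) (by simp only [List.length_cons]; omega)
    rw [List.take_succ_cons, List.sum_cons] at h
    omega
  · rintro ⟨h1, h2⟩
    refine ⟨by simp; omega, ?_⟩
    intro i hi
    cases i with
    | zero => simp
    | succ i =>
      simp only [List.length_cons] at hi
      have := h2 i (by omega)
      simp only [List.take_succ_cons, List.sum_cons]
      omega

lemma LukSet_zero_zero : LukSet 0 0 = {[]} := by
  ext t
  simp only [mem_LukSet, Finset.mem_singleton]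
  constructor
  · rintro ⟨⟨h1, h2⟩, h3⟩
    cases t with
    | nil => rfl
    | cons a t => have := h2 0 (by simp); simp at this
  · rintro rfl
    exact ⟨⟨rfl, by simp⟩, rfl⟩

lemma LukSet_zero_succ (s : ℕ) : LukSet 0 (s+1) = ∅ := by
  ext t
  simp only [mem_LukSet, Finset.notMem_empty, iff_false, not_and]
  rintro ⟨h1, h2⟩
  cases t with
  | nil => simp
  | cons a t => have := h2 0 (by simp); simp at this

lemma sum_LukSet_pow : ∀ (m s : ℕ),
    ∑ t ∈ LukSet m s, Ww t
      = PowerSeries.coeff s ((PowerSeries.mk LS) ^ m) := by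
  intro m
  induction m with
  | zero =>
    intro s
    rw [pow_zero]
    cases s with
    | zero => simp [LukSet_zero_zero, Ww]
    | succ s => simp [LukSet_zero_succ]
  | succ m ih =>
    intro s
    rw [pow_succ']
    rw [PowerSeries.coeff_mul]
    have : ∀ p ∈ Finset.HasAntidiagonal.antidiagonal s,
        (PowerSeries.coeff p.1) (PowerSeries.mk LS) *
          (PowerSeries.coeff p.2) ((PowerSeries.mk LS) ^ m)
        = ∑ ab ∈ LukSet 1 p.1 ×ˢ LukSet m p.2, Ww ab.1 * Ww ab.2 := by
      intro p _
      rw [PowerSeries.coeff_mk, ← ih]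
      simp only [LS]
      rw [Finset.sum_mul_sum, ← Finset.sum_product']
    rw [Finset.sum_congr rfl this, Finset.sum_sigma']
    refine (Finset.sum_nbij'
      (i := fun t : List ℕ => (⟨((t.take (cut t)).sum, (t.drop (cut t)).sum),
        (t.take (cut t), t.drop (cut t))⟩ : Σ _ : ℕ × ℕ, List ℕ × List ℕ))
      (j := fun x : Σ _ : ℕ × ℕ, List ℕ × List ℕ => x.2.1 ++ x.2.2) ?_ ?_ ?_ ?_ ?_)
    · intro t ht
      rw [mem_LukSet] at ht
      obtain ⟨hP, hsum⟩ := ht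
      obtain ⟨h1, h2⟩ := Pw_take_drop hP
      simp only [Finset.mem_sigma, Finset.HasAntidiagonal.mem_antidiagonal, Finset.mem_product, mem_LukSet]
      refine ⟨?_, ⟨h1, trivial⟩, ⟨h2, trivial⟩⟩
      have : (t.take (cut t)).sum + (t.drop (cut t)).sum = t.sum := by
        conv_rhs => rw [← List.take_append_drop (cut t) t]
        rw [List.sum_append]
      omega
    · rintro ⟨p, a, b⟩ hx
      simp only [Finset.mem_sigma, Finset.HasAntidiagonal.mem_antidiagonal, Finset.mem_product,
        mem_LukSet] at hx
      obtain ⟨hp, ⟨ha, hsa⟩, ⟨hb, hsb⟩⟩ := hx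
      dsimp only
      rw [mem_LukSet]
      exact ⟨Pw_append_one ha hb, by rw [List.sum_append]; omega⟩
    · intro t ht
      exact List.take_append_drop (cut t) t
    · rintro ⟨⟨p1, p2⟩, a, b⟩ hx
      simp only [Finset.mem_sigma, Finset.HasAntidiagonal.mem_antidiagonal, Finset.mem_product,
        mem_LukSet] at hx
      obtain ⟨hp, ⟨ha, hsa⟩, ⟨hb, hsb⟩⟩ := hx
      have hc : cut (a ++ b) = a.length := cut_append b ha
      simp only [hc, List.take_left, List.drop_left, hsa, hsb]
    · intro t ht
      conv_lhs => rw [← List.take_append_drop (cut t) t, Ww_append]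

lemma headI_tail_LukSet {n : ℕ} {t : List ℕ} (ht : t ∈ LukSet 1 n) :
    t.headI ≤ n ∧ t ≠ [] ∧ t.tail ∈ LukSet t.headI (n - t.headI) := by
  rw [mem_LukSet] at ht
  obtain ⟨hP, hsum⟩ := ht
  have hne : t ≠ [] := by
    intro h; rw [h] at hP; exact absurd hP.1 (by simp)
  obtain ⟨a, t', rfl⟩ : ∃ a t', t = a :: t' := by
    cases t with
    | nil => exact absurd rfl hne
    | cons a t' => exact ⟨a, t', rfl⟩
  have hhead : a ≤ n := by
    have : a ≤ (a :: t').sum := List.le_sum_of_mem (List.mem_cons_self)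
    omega
  simp only [List.headI_cons, List.tail_cons]
  refine ⟨hhead, hne, ?_⟩
  rw [mem_LukSet]
  refine ⟨Pw_one_cons.mp hP, ?_⟩
  simp only [List.sum_cons] at hsum
  omega

lemma cons_headI_tail {l : List ℕ} (h : l ≠ []) : l.headI :: l.tail = l := by
  cases l with
  | nil => exact absurd rfl h
  | cons a t => rfl

lemma LS_head (n : ℕ) :
    LS n = ∑ m ∈ Finset.range (n+1), fcoeff m * ∑ t ∈ LukSet m (n - m), Ww t := by
  have : ∀ m ∈ Finset.range (n+1),
      fcoeff m * ∑ t ∈ LukSet m (n - m), Ww t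
        = ∑ t ∈ LukSet m (n - m), fcoeff m * Ww t := by
    intro m _; rw [Finset.mul_sum]
  rw [Finset.sum_congr rfl this, Finset.sum_sigma']
  refine Finset.sum_nbij'
    (i := fun t => (⟨t.headI, t.tail⟩ : (_ : ℕ) × List ℕ))
    (j := fun x => x.1 :: x.2) ?_ ?_ ?_ ?_ ?_
  · intro t ht
    obtain ⟨h1, h2, h3⟩ := headI_tail_LukSet ht
    simp only [Finset.mem_sigma, Finset.mem_range]
    exact ⟨by omega, h3⟩
  · rintro ⟨m, t'⟩ hx
    simp only [Finset.mem_sigma, Finset.mem_range, mem_LukSet] at hx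
    obtain ⟨hm, hP, hs⟩ := hx
    rw [mem_LukSet]
    refine ⟨Pw_one_cons.mpr hP, ?_⟩
    simp only [List.sum_cons]
    omega
  · intro t ht
    obtain ⟨_, hne, _⟩ := headI_tail_LukSet ht
    simp only
    exact cons_headI_tail hne
  · rintro ⟨m, t'⟩ _
    simp
  · intro t ht
    obtain ⟨_, hne, _⟩ := headI_tail_LukSet ht
    conv_lhs => rw [← cons_headI_tail hne, Ww_cons]

lemma LS_rec (n : ℕ) :
    LS n = ∑ m ∈ Finset.range (n + 1),
      fcoeff m * PowerSeries.coeff n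
        (PowerSeries.X ^ m * (PowerSeries.mk LS) ^ m) := by
  rw [LS_head]
  refine Finset.sum_congr rfl fun m hm => ?_
  rw [Finset.mem_range] at hm
  rw [sum_LukSet_pow, PowerSeries.coeff_X_pow_mul', if_pos (by omega)]

lemma coeff_pow_congr {φ ψ : PowerSeries (MvPolynomial ℕ ℤ)} {n : ℕ}
    (h : ∀ k < n, PowerSeries.coeff k φ = PowerSeries.coeff k ψ) :
    ∀ (m : ℕ), ∀ k < n, PowerSeries.coeff k (φ ^ m)
      = PowerSeries.coeff k (ψ ^ m) := by
  intro m
  induction m with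
  | zero => intro k _; simp
  | succ m ih =>
    intro k hk
    rw [pow_succ', pow_succ', PowerSeries.coeff_mul, PowerSeries.coeff_mul]
    refine Finset.sum_congr rfl fun p hp => ?_
    rw [Finset.HasAntidiagonal.mem_antidiagonal] at hp
    rw [h p.1 (by omega), ih p.2 (by omega)]

theorem G_eq_LS (G : ℕ → MvPolynomial ℕ ℤ)
    (hG : ∀ n : ℕ,
      G n = ∑ m ∈ Finset.range (n + 1),
        fcoeff m *
          PowerSeries.coeff n
            (PowerSeries.X ^ m * (PowerSeries.mk G) ^ m)) :
    ∀ n : ℕ, G n = LS n := by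
  intro n
  induction n using Nat.strong_induction_on with
  | _ n ih =>
    rw [hG n, LS_rec n]
    refine Finset.sum_congr rfl fun m hm => ?_
    rw [Finset.mem_range] at hm
    congr 1
    have hmn : m ≤ n := by omega
    rw [PowerSeries.coeff_X_pow_mul', PowerSeries.coeff_X_pow_mul', if_pos hmn, if_pos hmn]
    cases m with
    | zero => simp
    | succ m =>
      refine coeff_pow_congr (n := n) (fun k hk => ?_) (m+1) (n - (m+1)) (by omega)
      simp only [PowerSeries.coeff_mk]
      exact ih k hk

lemma sum_take_ofFn {N : ℕ} (f : Fin N → ℕ) : ∀ (i : ℕ),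
    ((List.ofFn f).take i).sum
      = ∑ j ∈ Finset.univ.filter (fun j : Fin N => (j : ℕ) < i), f j := by
  intro i
  induction i with
  | zero => simp
  | succ i ih =>
    rcases Nat.lt_or_ge i N with hi | hi
    · rw [List.sum_take_succ _ i (by simpa using hi), ih]
      have hins : Finset.univ.filter (fun j : Fin N => (j : ℕ) < i + 1)
          = insert (⟨i, hi⟩ : Fin N) (Finset.univ.filter (fun j : Fin N => (j : ℕ) < i)) := by
        ext j
        simp only [Finset.mem_filter, Finset.mem_univ, true_and, Finset.mem_insert]
        constructor
        · intro h
          rcases Nat.lt_or_ge (j : ℕ) i with h' | h'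
          · exact Or.inr h'
          · exact Or.inl (Fin.ext (by omega : (j : ℕ) = i))
        · rintro (rfl | h)
          · simp
          · omega
      rw [hins, Finset.sum_insert (by simp), List.getElem_ofFn]
      omega
    · have h2 : (List.ofFn f).length ≤ i + 1 := by
        rw [List.length_ofFn]; omega
      rw [List.take_of_length_le h2, List.sum_ofFn]
      have : Finset.univ.filter (fun j : Fin N => (j : ℕ) < i + 1) = Finset.univ :=
        Finset.filter_true_of_mem (fun j _ => lt_of_lt_of_le j.isLt (by omega))
      rw [this]

lemma ofFn_min_getD {n : ℕ} {l : List ℕ} (hlen : l.length = n + 1)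
    (hbig : ∀ x ∈ l, x ≤ n) :
    List.ofFn (fun i : Fin (n + 1) =>
      ((⟨min (l.getD (i : ℕ) 0) n, by omega⟩ : Fin (n + 1)) : ℕ)) = l := by
  apply List.ext_getElem
  · simp [hlen]
  · intro i h1 h2
    simp only [List.getElem_ofFn]
    show min (l.getD i 0) n = l[i]
    rw [List.getD_eq_getElem l 0 h2]
    exact min_eq_left (hbig _ (List.getElem_mem _))

lemma luk_sum_eq_LS (n : ℕ) :
    ∑ w ∈ lukWords n, ∏ i, fcoeff (w i) = LS n := by
  refine Finset.sum_nbij'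
    (i := fun w => List.ofFn (fun j => ((w j : ℕ))))
    (j := fun l => fun i : Fin (n+1) => (⟨min (l.getD (i : ℕ) 0) n, by omega⟩ : Fin (n+1)))
    ?_ ?_ ?_ ?_ ?_
  · intro w hw
    simp only [lukWords, Finset.mem_filter, Finset.mem_univ, true_and] at hw
    obtain ⟨hsum, hpre⟩ := hw
    rw [mem_LukSet]
    have hs : (List.ofFn fun j => ((w j : ℕ))).sum = n := by
      rw [List.sum_ofFn]; exact hsum
    refine ⟨⟨by rw [hs, List.length_ofFn], ?_⟩, hs⟩
    intro i hi
    rw [List.length_ofFn] at hi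
    rw [sum_take_ofFn]
    have := hpre i (by omega)
    omega
  · intro l hl
    rw [mem_LukSet] at hl
    obtain ⟨⟨h1, h2⟩, h3⟩ := hl
    have hlen : l.length = n + 1 := by omega
    have hbig : ∀ x ∈ l, x ≤ n := fun x hx => by
      have := List.le_sum_of_mem hx; omega
    have hofn := ofFn_min_getD hlen hbig
    simp only [lukWords, Finset.mem_filter, Finset.mem_univ, true_and]
    constructor
    · have hsum' := congrArg List.sum hofn
      rw [List.sum_ofFn] at hsum'
      exact hsum'.trans h3
    · intro i hi
      have h := congrArg (fun l' : List ℕ => (l'.take i).sum) hofn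
      simp only at h
      rw [sum_take_ofFn] at h
      rw [h]
      have := h2 i (by omega)
      omega
  · intro w hw
    funext i
    apply Fin.ext
    have hlt : (i : ℕ) < (List.ofFn fun j : Fin (n+1) => ((w j : ℕ))).length := by
      have := i.isLt
      simp
      omega
    show min ((List.ofFn fun j : Fin (n+1) => ((w j : ℕ))).getD (i : ℕ) 0) n = (w i : ℕ)
    rw [List.getD_eq_getElem _ 0 hlt, List.getElem_ofFn]
    simp only [Fin.eta]
    have := (w i).isLt
    omega
  · intro l hl
    rw [mem_LukSet] at hl
    obtain ⟨⟨h1, h2⟩, h3⟩ := hl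
    have hlen : l.length = n + 1 := by omega
    have hbig : ∀ x ∈ l, x ≤ n := fun x hx => by
      have := List.le_sum_of_mem hx; omega
    exact ofFn_min_getD hlen hbig
  · intro w hw
    simp only [Ww, List.map_ofFn, List.prod_ofFn]
    rfl

/-- if `g(t) = ∑ g_n tⁿ` solves the Lagrange functional equation
`g(t) = f(t·g(t)) = ∑_m f_m tᵐ g(t)ᵐ` (stated coefficientwise; the coefficient
of `tⁿ` only involves the terms with `m ≤ n`), then `g_n` is the sum over all
Łukasiewicz words `(w₁,…,w_{n+1})` of the monomials `f_{w₁} f_{w₂} ⋯ f_{w_{n+1}}`. -/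
theorem statement15 (G : ℕ → MvPolynomial ℕ ℤ)
    (hG : ∀ n : ℕ,
      G n = ∑ m ∈ Finset.range (n + 1),
        fcoeff m *
          PowerSeries.coeff n
            (PowerSeries.X ^ m * (PowerSeries.mk G) ^ m)) :
    ∀ n : ℕ, G n = ∑ w ∈ lukWords n, ∏ i, fcoeff (w i) := by
  intro n
  rw [G_eq_LS G hG n, luk_sum_eq_LS n]

end
end
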